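/- arXiv:2402.06610 — 3 statements merged into one kernel-verified Lean document; each statement's English description precedes it below -/
import Mathlib

section
/- Let groups G₁ and G₂ act on a set Z with commuting actions and suppose the induced G₁ × G₂ action is free. Let ρ₁, ρ₂ be equivariant sections with canonical maps π₁, π₂. If π₁ ∘ π₂ = π₂ ∘ π₁, then ρ₁ is G₂-invariant and ρ₂ is G₁-invariant. -/
/-- If the product action is free and the canonical maps commute, then `ρ₁` is
`G₂`-invariant and `ρ₂` is `G₁`-invariant. -/
theorem cross_invariant_of_canonical_maps_commute
    {G₁ G₂ Z : Type*} [Group G₁] [Group G₂] [MulAction G₁ Z] [MulAction G₂ Z]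
    (hcomm : ∀ (g₁ : G₁) (g₂ : G₂) (z : Z), g₁ • g₂ • z = g₂ • g₁ • z)
    (hfree : ∀ (g₁ : G₁) (g₂ : G₂) (z : Z), g₁ • g₂ • z = z → g₁ = 1 ∧ g₂ = 1)
    (ρ₁ : Z → G₁) (hρ₁ : ∀ (g₁ : G₁) (z : Z), ρ₁ (g₁ • z) = g₁ * ρ₁ z)
    (ρ₂ : Z → G₂) (hρ₂ : ∀ (g₂ : G₂) (z : Z), ρ₂ (g₂ • z) = g₂ * ρ₂ z)
    (π₁ : Z → Z) (hπ₁ : ∀ z, π₁ z = (ρ₁ z)⁻¹ • z)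
    (π₂ : Z → Z) (hπ₂ : ∀ z, π₂ z = (ρ₂ z)⁻¹ • z)
    (hππ : π₁ ∘ π₂ = π₂ ∘ π₁) :
    (∀ (g₂ : G₂) (z : Z), ρ₁ (g₂ • z) = ρ₁ z) ∧
    (∀ (g₁ : G₁) (z : Z), ρ₂ (g₁ • z) = ρ₂ z) := by
  have key : ∀ z : Z, ρ₁ ((ρ₂ z)⁻¹ • z) = ρ₁ z ∧ ρ₂ ((ρ₁ z)⁻¹ • z) = ρ₂ z := by
    intro z
    have h := congrFun hππ z
    simp only [Function.comp_apply, hπ₁, hπ₂] at h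
    set a := ρ₁ ((ρ₂ z)⁻¹ • z) with ha
    set b := ρ₂ z with hb
    set c := ρ₂ ((ρ₁ z)⁻¹ • z) with hc
    set d := ρ₁ z with hd
    have h2 : (d * a⁻¹) • (c * b⁻¹) • z = z := by
      rw [mul_smul, mul_smul, hcomm a⁻¹ c (b⁻¹ • z), h]
      simp [smul_smul]
    obtain ⟨h3, h4⟩ := hfree _ _ _ h2
    exact ⟨(mul_inv_eq_one.mp h3).symm, mul_inv_eq_one.mp h4⟩
  constructor
  · intro g₂ z
    have h1 := (key (g₂ • z)).1
    rw [hρ₂, mul_inv_rev, mul_smul, inv_smul_smul] at h1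
    rw [← h1, (key z).1]
  · intro g₁ z
    have h1 := (key (g₁ • z)).2
    rw [hρ₁, mul_inv_rev, mul_smul, inv_smul_smul] at h1
    rw [← h1, (key z).2]
end

section
/- Let v ∈ K[t]ⁿ (n > 1) with gcd(v) = 1, let b be a normalized Bézout vector of v (⟨v, b⟩ = 1), and let u₁, …, u_{n-1} be a normalized μ-basis of b, i.e., u₁ ∧ ⋯ ∧ u_{n-1} = b and Σ deg(uᵢ) = deg(b). Then the matrix M = [v, u₁, …, u_{n-1}] has determinant 1 (so M is a matrix completion of v), and deg(M) = deg(v) + deg(b), where deg(M) is the sum of the degrees of the columns of M. -/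
open Polynomial

/-- Adjoining `v` with a normalized μ-basis of a normalized Bézout vector `b` of `v`
produces a matrix completion of `v` of degree `deg v + deg b`. -/
theorem matrix_completion_from_bezout_and_mu_basis
    {K : Type*} [Field K] [CharZero K] {m : ℕ} (hm : 0 < m)
    (v : Fin (m + 1) → K[X]) (hv : ∀ p : K[X], (∀ i, p ∣ v i) → IsUnit p)
    (b : Fin (m + 1) → K[X]) (hb : ∑ i, v i * b i = 1)
    (u : Fin m → Fin (m + 1) → K[X])
    (hwedge : ∀ i : Fin (m + 1),
      (-1 : K[X]) ^ (i : ℕ) *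
        (Matrix.of fun r c : Fin m => u c (i.succAbove r)).det = b i)
    (hdeg : (∑ k, Finset.univ.sup fun i => (u k i).natDegree) =
      Finset.univ.sup fun i => (b i).natDegree)
    (M : Matrix (Fin (m + 1)) (Fin (m + 1)) K[X])
    (hM : ∀ i j, M i j = Fin.cons (α := fun _ => Fin (m + 1) → K[X]) v u j i) :
    M.det = 1 ∧
    (∑ j, Finset.univ.sup fun i => (M i j).natDegree) =
      (Finset.univ.sup fun i => (v i).natDegree) +
        Finset.univ.sup fun i => (b i).natDegree := by
  constructor
  · rw [Matrix.det_succ_column_zero]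
    have : ∀ i : Fin (m + 1),
        (-1 : K[X]) ^ (i : ℕ) * M i 0 * (M.submatrix i.succAbove Fin.succ).det
          = v i * b i := by
      intro i
      have h1 : M.submatrix i.succAbove Fin.succ =
          Matrix.of fun r c : Fin m => u c (i.succAbove r) := by
        ext r c
        simp [Matrix.submatrix_apply, hM]
      have h2 : M i 0 = v i := by simp [hM]
      rw [h1, h2, ← hwedge i]; ring
    rw [Finset.sum_congr rfl fun i _ => this i, hb]
  · rw [Fin.sum_univ_succ]
    have h0 : (Finset.univ.sup fun i => (M i 0).natDegree)
        = Finset.univ.sup fun i => (v i).natDegree := by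
      apply Finset.sup_congr rfl
      intro i _
      simp [hM]
    have hs : ∀ j : Fin m, (Finset.univ.sup fun i => (M i j.succ).natDegree)
        = Finset.univ.sup fun i => (u j i).natDegree := by
      intro j
      apply Finset.sup_congr rfl
      intro i _
      simp [hM]
    rw [h0, Finset.sum_congr rfl fun j _ => hs j, hdeg]
end

section
/- Let v ∈ K[t]ⁿ with gcd(v) = 1 and let β be the minimal degree among Bézout vectors of v. Then every matrix completion M of v (n×n polynomial matrix with first column v and determinant 1) satisfies deg(M) ≥ deg(v) + β, where deg(M) is the sum of the degrees of its columns. Consequently, a matrix completion M of v is of minimal degree if and only if deg(M) = deg(v) + β. -/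
open Polynomial Matrix Finset

namespace MCAux

variable {K : Type*} [Field K] {m : ℕ}

lemma natDegree_neg_one_pow_mul (k : ℕ) (p : K[X]) :
    ((-1 : K[X]) ^ k * p).natDegree = p.natDegree := by
  rcases Nat.even_or_odd k with h | h
  · rw [h.neg_one_pow, one_mul]
  · rw [h.neg_one_pow, neg_one_mul, natDegree_neg]

lemma coeff_prod_eq {ι : Type*} (s : Finset ι) (f : ι → K[X]) (d : ι → ℕ)
    (h : ∀ i ∈ s, (f i).natDegree ≤ d i) :
    (∏ i ∈ s, f i).coeff (∑ i ∈ s, d i) = ∏ i ∈ s, (f i).coeff (d i) := by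
  classical
  induction s using Finset.cons_induction with
  | empty => simp
  | cons a s ha ih =>
    have h1 : (f a).natDegree ≤ d a := h a (Finset.mem_cons_self a s)
    have h2 : (∏ i ∈ s, f i).natDegree ≤ ∑ i ∈ s, d i :=
      (Polynomial.natDegree_prod_le _ _).trans
        (Finset.sum_le_sum fun i hi => h i (Finset.mem_cons_of_mem hi))
    rw [Finset.prod_cons, Finset.sum_cons, Finset.prod_cons,
      Polynomial.coeff_mul_add_eq_of_natDegree_le h1 h2,
      ih fun i hi => h i (Finset.mem_cons_of_mem hi)]

lemma natDegree_det_le {p : Type*} [Fintype p] [DecidableEq p]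
    (A : Matrix p p K[X]) :
    (A.det).natDegree ≤ ∑ j, Finset.univ.sup (fun i => (A i j).natDegree) := by
  rw [Matrix.det_apply']
  refine Polynomial.natDegree_sum_le_of_forall_le _ _ fun σ _ => ?_
  refine (Polynomial.natDegree_mul_le).trans ?_
  have h0 : (Polynomial.natDegree (((Equiv.Perm.sign σ : ℤ) : K[X]))) = 0 :=
    Polynomial.natDegree_intCast _
  rw [h0, zero_add]
  refine (Polynomial.natDegree_prod_le _ _).trans ?_
  exact Finset.sum_le_sum fun j _ =>
    Finset.le_sup (f := fun i => (A i j).natDegree) (Finset.mem_univ (σ j))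

/-- Cofactor vector along column 0. -/
noncomputable def cof (A : Matrix (Fin (m+1)) (Fin (m+1)) K[X]) (i : Fin (m+1)) : K[X] :=
  (-1 : K[X]) ^ (i : ℕ) * (A.submatrix i.succAbove Fin.succ).det

lemma sum_col_zero_mul_cof (A : Matrix (Fin (m+1)) (Fin (m+1)) K[X]) :
    ∑ i, A i 0 * cof A i = A.det := by
  rw [Matrix.det_succ_column_zero]
  refine Finset.sum_congr rfl fun i _ => ?_
  rw [cof]; ring

lemma sum_col_succ_mul_cof (A : Matrix (Fin (m+1)) (Fin (m+1)) K[X]) (j : Fin m) :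
    ∑ i, A i j.succ * cof A i = 0 := by
  have h0 : (0 : Fin (m+1)) ≠ j.succ := (Fin.succ_ne_zero j).symm
  have hsub : ∀ i : Fin (m+1),
      (A.updateCol 0 (fun k => A k j.succ)).submatrix i.succAbove Fin.succ
        = A.submatrix i.succAbove Fin.succ := by
    intro i
    refine Matrix.ext fun r s => ?_
    simp [Matrix.submatrix_apply, Matrix.updateCol_ne (Fin.succ_ne_zero s)]
  calc ∑ i, A i j.succ * cof A i
      = (A.updateCol 0 (fun k => A k j.succ)).det := by
        rw [Matrix.det_succ_column_zero]
        refine Finset.sum_congr rfl fun i _ => ?_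
        rw [cof, Matrix.updateCol_self, hsub i]; ring
    _ = 0 := Matrix.det_zero_of_column_eq h0 (fun k => by
        rw [Matrix.updateCol_self, Matrix.updateCol_ne h0.symm])

lemma natDegree_cof_le (A : Matrix (Fin (m+1)) (Fin (m+1)) K[X]) (i : Fin (m+1)) :
    (cof A i).natDegree ≤ ∑ j : Fin m, Finset.univ.sup fun i' => (A i' j.succ).natDegree := by
  rw [cof, natDegree_neg_one_pow_mul]
  refine (natDegree_det_le _).trans (Finset.sum_le_sum fun j _ => ?_)
  refine Finset.sup_le fun r _ => ?_
  exact Finset.le_sup (f := fun i' => (A i' j.succ).natDegree) (Finset.mem_univ _)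

/-- From `Aᵀ x = 0` and `det A = 1` conclude `x = 0`. -/
lemma eq_zero_of_dot_cols (A : Matrix (Fin (m+1)) (Fin (m+1)) K[X]) (hdet : A.det = 1)
    (x : Fin (m+1) → K[X]) (hx : ∀ j, ∑ i, A i j * x i = 0) : x = 0 := by
  have hmv : Aᵀ *ᵥ x = 0 := by
    funext j
    simpa [Matrix.mulVec, dotProduct, Matrix.transpose_apply] using hx j
  have h2 : (Aᵀ.adjugate * Aᵀ) *ᵥ x = 0 := by
    rw [← Matrix.mulVec_mulVec, hmv, Matrix.mulVec_zero]
  rw [Matrix.adjugate_mul, Matrix.det_transpose, hdet] at h2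
  simpa using h2

/-- The matrix with first column `v` and the other columns `W`. -/
noncomputable def mat (v : Fin (m+1) → K[X]) (W : Fin m → Fin (m+1) → K[X]) :
    Matrix (Fin (m+1)) (Fin (m+1)) K[X] :=
  Matrix.of fun i j => Fin.cases (v i) (fun s => W s i) j

@[simp] lemma mat_zero (v : Fin (m+1) → K[X]) (W : Fin m → Fin (m+1) → K[X]) (i) :
    mat v W i 0 = v i := rfl

@[simp] lemma mat_succ (v : Fin (m+1) → K[X]) (W : Fin m → Fin (m+1) → K[X]) (i) (j : Fin m) :
    mat v W i j.succ = W j i := by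
  simp [mat]

lemma det_updateCol_add_sum {p : Type*} [Fintype p] [DecidableEq p]
    (A : Matrix p p K[X]) {j : p} (s : Finset p) (hj : j ∉ s) (c : p → K[X]) :
    (A.updateCol j (fun i => A i j + ∑ k ∈ s, c k * A i k)).det = A.det := by
  rw [← Matrix.det_transpose A, ← Matrix.det_transpose, ← Matrix.updateRow_transpose]
  have hfun : (fun i => A i j + ∑ k ∈ s, c k * A i k)
      = (1:K[X]) • Aᵀ j + ∑ k ∈ s, c k • Aᵀ k := by
    funext i
    simp [Matrix.transpose_apply, Finset.sum_apply]
  rw [hfun, Matrix.det_updateRow_sum_aux Aᵀ s hj c 1, one_smul]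

lemma det_mat_sub (M : Matrix (Fin (m+1)) (Fin (m+1)) K[X]) (v : Fin (m+1) → K[X])
    (hM1 : ∀ i, M i 0 = v i) (c : Fin m → K[X]) :
    (mat v (fun s i => M i s.succ - c s * v i)).det = M.det := by
  suffices h : ∀ s : Finset (Fin m),
      (mat v (fun t i => if t ∈ s then M i t.succ - c t * v i else M i t.succ)).det = M.det by
    simpa using h Finset.univ
  intro s
  induction s using Finset.induction_on with
  | empty =>
    congr 1
    refine Matrix.ext fun i j => ?_
    refine Fin.cases ?_ (fun t => ?_) j <;> simp [hM1]
  | @insert t s ht ih =>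
    set B := mat v (fun t' i => if t' ∈ s then M i t'.succ - c t' * v i else M i t'.succ) with hB
    have hkey : mat v (fun t' i => if t' ∈ insert t s then M i t'.succ - c t' * v i else M i t'.succ)
        = B.updateCol t.succ
            (fun i => B i t.succ + ∑ k ∈ ({0} : Finset (Fin (m+1))), (-c t) * B i k) := by
      refine Matrix.ext fun i j => ?_
      refine Fin.cases ?_ (fun u => ?_) j
      · rw [Matrix.updateCol_ne (Fin.succ_ne_zero t).symm]
        simp [hB]
      · rcases eq_or_ne u t with rfl | hu
        · rw [Matrix.updateCol_self, Finset.sum_singleton]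
          simp [hB, ht, sub_eq_add_neg, mul_comm]
        · rw [Matrix.updateCol_ne (fun h => hu (Fin.succ_injective _ h))]
          simp [hB, Finset.mem_insert, hu]
    rw [hkey, det_updateCol_add_sum B ({0} : Finset (Fin (m+1)))
      (by simp [Fin.succ_ne_zero t]) (fun _ => -c t), ih]

lemma exists_completion_aux (v a : Fin (m+1) → K[X])
    (hva : ∑ i, v i * a i = 1) :
    ∀ D : ℕ, ∀ W : Fin m → Fin (m+1) → K[X],
      (∑ j, Finset.univ.sup fun i => (W j i).natDegree) = D →
      (mat v W).det = 1 →
      (∀ j, ∑ i, a i * W j i = 0) →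
      ∃ N : Matrix (Fin (m+1)) (Fin (m+1)) K[X],
        (∀ i, N i 0 = v i) ∧ N.det = 1 ∧
        (∑ j : Fin m, Finset.univ.sup fun i => (N i j.succ).natDegree) ≤
          Finset.univ.sup fun i => (a i).natDegree := by
  intro D
  induction D using Nat.strong_induction_on with
  | _ D IH =>
  intro W hWD hWdet hWa
  classical
  set d : Fin m → ℕ := fun j => Finset.univ.sup fun i => (W j i).natDegree with hd
  set lc : Fin m → (Fin (m+1) → K) := fun j i => (W j i).coeff (d j) with hlc
  by_cases hli : LinearIndependent K lc
  · -- terminal case : columns are reduced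
    -- find a row i0 whose deletion keeps the leading coefficients independent
    have hex : ∃ i0 : Fin (m+1), Pi.single i0 (1:K) ∉ Submodule.span K (Set.range lc) := by
      by_contra hcon
      push_neg at hcon
      have hsp : Submodule.span K (Set.range lc) = ⊤ := by
        rw [eq_top_iff]
        intro x _
        rw [pi_eq_sum_univ x]
        refine Submodule.sum_mem _ fun i _ => Submodule.smul_mem _ _ ?_
        have hsingle : (fun j => if i = j then (1:K) else 0) = Pi.single i (1:K) := by
          funext j
          rcases eq_or_ne j i with rfl | hne
          · simp [Pi.single_eq_same]
          · simp [Pi.single_eq_of_ne hne, Ne.symm hne]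
        rw [hsingle]
        exact hcon i
      have h2 := finrank_range_le_card (R := K) lc
      rw [Set.finrank, hsp] at h2
      rw [finrank_top, Module.finrank_fin_fun, Fintype.card_fin] at h2
      omega
    obtain ⟨i0, hi0⟩ := hex
    have hli2 : LinearIndependent K (fun j => lc j ∘ i0.succAbove) := by
      rw [Fintype.linearIndependent_iff]
      intro c hc
      set y : Fin (m+1) → K := fun i => ∑ j, c j * lc j i with hy
      have hyr : ∀ r, y (i0.succAbove r) = 0 := by
        intro r
        have h3 := congrFun hc r
        simpa [Finset.sum_apply, hy] using h3
      have hyspan : y ∈ Submodule.span K (Set.range lc) := by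
        have : y = ∑ j, c j • lc j := by
          funext i; simp [hy, Finset.sum_apply]
        rw [this]
        exact Submodule.sum_mem _ fun j _ =>
          Submodule.smul_mem _ _ (Submodule.subset_span ⟨j, rfl⟩)
      have hyi0 : y i0 = 0 := by
        by_contra hne
        apply hi0
        have hsingle : Pi.single i0 (1:K) = (y i0)⁻¹ • y := by
          funext i
          rcases eq_or_ne i i0 with rfl | hne2
          · simp [Pi.single_eq_same, inv_mul_cancel₀ hne]
          · obtain ⟨r, hr⟩ := Fin.exists_succAbove_eq hne2
            rw [Pi.single_eq_of_ne hne2, Pi.smul_apply, ← hr, hyr r, smul_zero]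
        rw [hsingle]
        exact Submodule.smul_mem _ _ hyspan
      have hy0 : (∑ j, c j • lc j) = 0 := by
        funext i
        have : y i = 0 := by
          rcases eq_or_ne i i0 with rfl | hne2
          · exact hyi0
          · obtain ⟨r, hr⟩ := Fin.exists_succAbove_eq hne2
            rw [← hr]; exact hyr r
        simpa [hy, Finset.sum_apply] using this
      exact Fintype.linearIndependent_iff.mp hli c hy0
    set L : Matrix (Fin m) (Fin m) K := Matrix.of (fun r s => lc s (i0.succAbove r)) with hL
    have hLdet : L.det ≠ 0 := by
      intro h0
      obtain ⟨x, hx0, hxv⟩ := Matrix.exists_mulVec_eq_zero_iff.mpr h0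
      apply hx0
      funext j
      refine Fintype.linearIndependent_iff.mp hli2 x ?_ j
      funext r
      have h3 := congrFun hxv r
      simpa [Matrix.mulVec, dotProduct, Finset.sum_apply, hL, mul_comm] using h3
    set A := mat v W with hA
    have hBrs : ∀ r s, (A.submatrix i0.succAbove Fin.succ) r s = W s (i0.succAbove r) := by
      intro r s; simp [hA]
    have hcoeffB : ((A.submatrix i0.succAbove Fin.succ).det).coeff (∑ j, d j) = L.det := by
      rw [Matrix.det_apply' (M := A.submatrix i0.succAbove Fin.succ), Matrix.det_apply' (M := L),
        Polynomial.finset_sum_coeff]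
      refine Finset.sum_congr rfl fun σ _ => ?_
      have hcast : ((Equiv.Perm.sign σ : ℤ) : K[X]) = Polynomial.C ((Equiv.Perm.sign σ : ℤ) : K) :=
        (map_intCast (Polynomial.C : K →+* K[X]) _).symm
      rw [hcast, Polynomial.coeff_C_mul]
      have hprod : (∏ s, (A.submatrix i0.succAbove Fin.succ) (σ s) s).coeff (∑ j, d j)
          = ∏ s, ((A.submatrix i0.succAbove Fin.succ) (σ s) s).coeff (d s) := by
        refine coeff_prod_eq Finset.univ _ d fun s _ => ?_
        rw [hBrs]
        exact Finset.le_sup (f := fun i => (W s i).natDegree) (Finset.mem_univ _)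
      rw [hprod]
      congr 1
    have hdle : (∑ j, d j) ≤ (cof A i0).natDegree := by
      rw [cof, natDegree_neg_one_pow_mul]
      refine Polynomial.le_natDegree_of_ne_zero ?_
      rw [hcoeffB]
      exact hLdet
    have hga : cof A = a := by
      have hz : (fun i => cof A i - a i) = 0 := by
        refine eq_zero_of_dot_cols A hWdet _ fun j => ?_
        have hsplit : ∑ i, A i j * (cof A i - a i)
            = (∑ i, A i j * cof A i) - ∑ i, A i j * a i := by
          rw [← Finset.sum_sub_distrib]
          exact Finset.sum_congr rfl fun i _ => by ring
        rw [hsplit]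
        refine Fin.cases ?_ (fun s => ?_) j
        · rw [sum_col_zero_mul_cof, hWdet]
          have hone : ∑ i, A i 0 * a i = 1 := by
            rw [← hva]
            exact Finset.sum_congr rfl fun i _ => by rw [hA, mat_zero]
          rw [hone, sub_self]
        · rw [sum_col_succ_mul_cof]
          have hzero : ∑ i, A i s.succ * a i = 0 := by
            calc ∑ i, A i s.succ * a i = ∑ i, a i * W s i :=
                  Finset.sum_congr rfl fun i _ => by rw [hA, mat_succ]; ring
              _ = 0 := hWa s
          rw [hzero, sub_self]
      funext i
      have h4 := congrFun hz i
      simpa [sub_eq_zero] using h4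
    refine ⟨A, fun i => rfl, hWdet, ?_⟩
    have hstep : (∑ j : Fin m, Finset.univ.sup fun i => (A i j.succ).natDegree) = ∑ j, d j := by
      refine Finset.sum_congr rfl fun j _ => ?_
      refine Finset.sup_congr rfl fun i _ => ?_
      rw [hA, mat_succ]
    rw [hstep]
    refine hdle.trans ?_
    rw [hga]
    exact Finset.le_sup (f := fun i => (a i).natDegree) (Finset.mem_univ i0)
  · -- reduction case
    obtain ⟨c, hc, j1, hj1⟩ := Fintype.not_linearIndependent_iff.mp hli
    set T : Finset (Fin m) := Finset.univ.filter (fun j => c j ≠ 0) with hT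
    have hTne : T.Nonempty := ⟨j1, by simp [hT, hj1]⟩
    obtain ⟨j0, hj0T, hj0max⟩ := Finset.exists_max_image T d hTne
    have hcj0 : c j0 ≠ 0 := by
      have := hj0T; rw [hT, Finset.mem_filter] at this; exact this.2
    have hdk : ∀ k, c k ≠ 0 → d k ≤ d j0 := fun k hk =>
      hj0max k (by rw [hT, Finset.mem_filter]; exact ⟨Finset.mem_univ k, hk⟩)
    set p : Fin m → K[X] := fun k => if k = j0 then 0
      else Polynomial.C (c k / c j0) * Polynomial.X ^ (d j0 - d k) with hp
    set u : Fin (m+1) → K[X] := fun i => W j0 i + ∑ k, p k * W k i with hu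
    set W' : Fin m → Fin (m+1) → K[X] := fun j => if j = j0 then u else W j with hW'
    have hdet' : (mat v W').det = 1 := by
      have hkey : mat v W' = (mat v W).updateCol j0.succ
          (fun i => (mat v W) i j0.succ
            + ∑ k ∈ Finset.univ.erase j0.succ,
                (Fin.cases 0 p : Fin (m+1) → K[X]) k * (mat v W) i k) := by
        refine Matrix.ext fun i j => ?_
        refine Fin.cases ?_ (fun s => ?_) j
        · rw [Matrix.updateCol_ne (Fin.succ_ne_zero j0).symm]
          simp
        · rcases eq_or_ne s j0 with hsj | hs
          · rw [hsj, mat_succ, Matrix.updateCol_self]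
            have hsum : ∑ k ∈ Finset.univ.erase (Fin.succ j0),
                (Fin.cases 0 p : Fin (m+1) → K[X]) k * (mat v W) i k
                = ∑ k, p k * W k i := by
              rw [Finset.sum_erase _ (by simp [hp])]
              rw [Fin.sum_univ_succ]
              simp
            rw [hsum, mat_succ, hW']
            simp [hu]
          · rw [Matrix.updateCol_ne (fun h => hs (Fin.succ_injective _ h)),
              mat_succ, mat_succ, hW']
            simp [hs]
      rw [hkey, det_updateCol_add_sum _ _ (Finset.notMem_erase _ _) _, hWdet]
    have horth' : ∀ j, ∑ i, a i * W' j i = 0 := by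
      intro j
      rcases eq_or_ne j j0 with hjj | hj
      · rw [hjj]
        have hW'j : ∀ i, W' j0 i = u i := by intro i; rw [hW']; simp
        have h1 : ∑ i, a i * W' j0 i
            = (∑ i, a i * W j0 i) + ∑ k, p k * ∑ i, a i * W k i := by
          calc ∑ i, a i * W' j0 i
              = ∑ i, (a i * W j0 i + a i * ∑ k, p k * W k i) := by
                refine Finset.sum_congr rfl fun i _ => ?_
                rw [hW'j i, hu]
                ring
            _ = (∑ i, a i * W j0 i) + ∑ i, a i * ∑ k, p k * W k i :=
                Finset.sum_add_distrib
            _ = (∑ i, a i * W j0 i) + ∑ k, p k * ∑ i, a i * W k i := by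
                congr 1
                calc ∑ i, a i * ∑ k, p k * W k i
                    = ∑ i, ∑ k, a i * (p k * W k i) := by
                      refine Finset.sum_congr rfl fun i _ => ?_
                      rw [Finset.mul_sum]
                  _ = ∑ k, ∑ i, a i * (p k * W k i) := Finset.sum_comm
                  _ = ∑ k, p k * ∑ i, a i * W k i := by
                      refine Finset.sum_congr rfl fun k _ => ?_
                      rw [Finset.mul_sum]
                      exact Finset.sum_congr rfl fun i _ => by ring
        rw [h1, hWa j0]
        simp [hWa]
      · have hW'j : ∀ i, W' j i = W j i := by intro i; rw [hW']; simp [hj]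
        calc ∑ i, a i * W' j i = ∑ i, a i * W j i :=
              Finset.sum_congr rfl fun i _ => by rw [hW'j i]
          _ = 0 := hWa j
    have hci : ∀ i, ∑ k, c k * lc k i = 0 := by
      intro i
      have h3 := congrFun hc i
      simpa [Finset.sum_apply] using h3
    have hcoeffu : ∀ (i : Fin (m+1)) (e : ℕ), d j0 ≤ e → (u i).coeff e = 0 := by
      intro i e he
      have hWcoeff : ∀ (k : Fin m) (e' : ℕ), d k < e' → (W k i).coeff e' = 0 := by
        intro k e' he'
        refine Polynomial.coeff_eq_zero_of_natDegree_lt (lt_of_le_of_lt ?_ he')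
        exact Finset.le_sup (f := fun i' => (W k i').natDegree) (Finset.mem_univ i)
      have hterm : ∀ k : Fin m, (p k * W k i).coeff e
          = if k = j0 then 0 else (c k / c j0) * (if e = d j0 then lc k i else 0) := by
        intro k
        rcases eq_or_ne k j0 with hkj | hk
        · rw [hkj]; simp [hp]
        · rw [if_neg hk]
          rcases eq_or_ne (c k) 0 with hck | hck
          · simp [hp, if_neg hk, hck]
          · have hdkle : d k ≤ d j0 := hdk k hck
            have hel : d j0 - d k ≤ e := le_trans (Nat.sub_le _ _) he
            rw [hp]
            simp only [if_neg hk]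
            rw [mul_assoc, Polynomial.coeff_C_mul, Polynomial.coeff_X_pow_mul', if_pos hel]
            rcases eq_or_ne e (d j0) with heq | hne
            · rw [if_pos heq]
              have harg : e - (d j0 - d k) = d k := by omega
              rw [harg]
            · have he' : d j0 < e := lt_of_le_of_ne he (Ne.symm hne)
              rw [if_neg hne, mul_zero, hWcoeff k _ (by omega), mul_zero]
      have hsplit : (u i).coeff e = (W j0 i).coeff e + ∑ k, (p k * W k i).coeff e := by
        rw [hu]
        simp only []
        rw [Polynomial.coeff_add, Polynomial.finset_sum_coeff]
      rw [hsplit, Finset.sum_congr rfl fun k _ => hterm k]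
      rcases eq_or_ne e (d j0) with rfl | hne
      · simp only [if_pos rfl]
        have hlcj0 : (W j0 i).coeff (d j0) = lc j0 i := rfl
        have hdiv : ∑ k, (c k / c j0) * lc k i = 0 := by
          have h5 : ∑ k, (c k / c j0) * lc k i = (∑ k, c k * lc k i) / c j0 := by
            rw [Finset.sum_div]
            exact Finset.sum_congr rfl fun k _ => by ring
          rw [h5, hci i, zero_div]
        calc (W j0 i).coeff (d j0) + ∑ k, (if k = j0 then 0 else (c k / c j0) * lc k i)
            = (c j0 / c j0) * lc j0 i
              + ∑ k ∈ Finset.univ.erase j0, (c k / c j0) * lc k i := by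
              rw [div_self hcj0, one_mul, hlcj0]
              congr 1
              rw [← Finset.add_sum_erase _ (fun k => if k = j0 then 0 else c k / c j0 * lc k i)
                (Finset.mem_univ j0), if_pos rfl, zero_add]
              exact Finset.sum_congr rfl fun k hk => by
                rw [if_neg (Finset.ne_of_mem_erase hk)]
          _ = ∑ k, (c k / c j0) * lc k i :=
                Finset.add_sum_erase _ (fun k => c k / c j0 * lc k i) (Finset.mem_univ j0)
          _ = 0 := hdiv
      · have he' : d j0 < e := lt_of_le_of_ne he (Ne.symm hne)
        rw [hWcoeff j0 e he']
        simp [if_neg hne]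
    have hupos : ∃ i, u i ≠ 0 := by
      by_contra hcon
      push_neg at hcon
      have hz : (mat v W').det = 0 := by
        refine Matrix.det_eq_zero_of_column_eq_zero j0.succ (fun i => ?_)
        rw [mat_succ, hW']
        simp [hcon i]
      rw [hdet'] at hz
      exact one_ne_zero hz
    have hdj0pos : 0 < d j0 := by
      rcases Nat.eq_zero_or_pos (d j0) with h0 | h
      · exfalso
        obtain ⟨i, hi⟩ := hupos
        refine hi (Polynomial.ext fun e => ?_)
        rw [Polynomial.coeff_zero]
        exact hcoeffu i e (by omega)
      · exact h
    have hdeglt : ∀ i, (u i).natDegree < d j0 := by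
      intro i
      rcases eq_or_ne (u i) 0 with h | h
      · rw [h, Polynomial.natDegree_zero]; exact hdj0pos
      · by_contra hcon
        push_neg at hcon
        exact Polynomial.leadingCoeff_ne_zero.mpr h (hcoeffu i _ hcon)
    have hlt : (∑ j, Finset.univ.sup fun i => (W' j i).natDegree) < D := by
      rw [← hWD]
      refine Finset.sum_lt_sum (fun j _ => ?_) ⟨j0, Finset.mem_univ j0, ?_⟩
      · rcases eq_or_ne j j0 with hjj | hj
        · rw [hjj]
          refine le_of_lt ((Finset.sup_lt_iff (by exact hdj0pos)).mpr fun i _ => ?_)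
          rw [hW']; simp only [if_pos rfl]
          exact hdeglt i
        · rw [hW']; simp [hj]
      · refine (Finset.sup_lt_iff (by exact hdj0pos)).mpr fun i _ => ?_
        rw [hW']; simp only [if_pos rfl]
        exact hdeglt i
    exact IH _ hlt W' rfl hdet' horth'


end MCAux

open Polynomial

/-- Any matrix completion of `v` has degree at least `deg v + β`, where `β` is
the minimal degree of Bézout vectors of `v`; hence a matrix completion is of
minimal degree iff its degree equals `deg v + β`. -/
theorem matrix_completion_degree_bound
    {K : Type*} [Field K] [CharZero K] {n : ℕ} [NeZero n]
    (v : Fin n → K[X]) (hv : ∀ p : K[X], (∀ i, p ∣ v i) → IsUnit p)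
    (β : ℕ)
    (hβ : β = sInf {d : ℕ | ∃ b : Fin n → K[X],
        (∃ lam : K, lam ≠ 0 ∧ ∑ i, v i * b i = C lam) ∧
        (Finset.univ.sup fun i => (b i).natDegree) = d})
    (M : Matrix (Fin n) (Fin n) K[X])
    (hM1 : ∀ i, M i 0 = v i) (hMdet : M.det = 1) :
    ((Finset.univ.sup fun i => (v i).natDegree) + β ≤
        ∑ j, Finset.univ.sup fun i => (M i j).natDegree) ∧
    ((∀ N : Matrix (Fin n) (Fin n) K[X], (∀ i, N i 0 = v i) → N.det = 1 →
        (∑ j, Finset.univ.sup fun i => (M i j).natDegree) ≤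
          ∑ j, Finset.univ.sup fun i => (N i j).natDegree) ↔
      (∑ j, Finset.univ.sup fun i => (M i j).natDegree) =
        (Finset.univ.sup fun i => (v i).natDegree) + β) := by
  classical
  obtain ⟨m, rfl⟩ : ∃ m, n = m + 1 := ⟨n - 1, (Nat.succ_pred_eq_of_pos (NeZero.pos n)).symm⟩
  -- membership of cofactor degrees in the Bezout set
  have hmemS : ∀ N : Matrix (Fin (m+1)) (Fin (m+1)) K[X], (∀ i, N i 0 = v i) → N.det = 1 →
      (Finset.univ.sup fun i => (MCAux.cof N i).natDegree) ∈
        {d : ℕ | ∃ b : Fin (m+1) → K[X],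
          (∃ lam : K, lam ≠ 0 ∧ ∑ i, v i * b i = C lam) ∧
          (Finset.univ.sup fun i => (b i).natDegree) = d} := by
    intro N hN1 hNdet
    refine ⟨MCAux.cof N, ⟨1, one_ne_zero, ?_⟩, rfl⟩
    rw [_root_.map_one, ← hNdet, ← MCAux.sum_col_zero_mul_cof N]
    exact Finset.sum_congr rfl fun i _ => by rw [hN1]
  -- the lower bound, for an arbitrary completion
  have hmem : ∀ N : Matrix (Fin (m+1)) (Fin (m+1)) K[X], (∀ i, N i 0 = v i) → N.det = 1 →
      β ≤ ∑ j : Fin m, Finset.univ.sup fun i => (N i j.succ).natDegree := by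
    intro N hN1 hNdet
    have hb : β ≤ Finset.univ.sup fun i => (MCAux.cof N i).natDegree := by
      rw [hβ]
      exact Nat.sInf_le (hmemS N hN1 hNdet)
    exact hb.trans (Finset.sup_le fun i _ => MCAux.natDegree_cof_le N i)
  have hlow : ∀ N : Matrix (Fin (m+1)) (Fin (m+1)) K[X], (∀ i, N i 0 = v i) → N.det = 1 →
      (Finset.univ.sup fun i => (v i).natDegree) + β ≤
        ∑ j, Finset.univ.sup fun i => (N i j).natDegree := by
    intro N hN1 hNdet
    rw [Fin.sum_univ_succ]
    have h0 : (Finset.univ.sup fun i => (N i 0).natDegree)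
        = Finset.univ.sup fun i => (v i).natDegree :=
      Finset.sup_congr rfl fun i _ => by rw [hN1]
    rw [h0]
    exact add_le_add_right (hmem N hN1 hNdet) _
  -- a Bezout vector of minimal degree, normalized
  have hβmem : β ∈ {d : ℕ | ∃ b : Fin (m+1) → K[X],
      (∃ lam : K, lam ≠ 0 ∧ ∑ i, v i * b i = C lam) ∧
      (Finset.univ.sup fun i => (b i).natDegree) = d} := by
    rw [hβ]
    exact Nat.sInf_mem ⟨_, hmemS M hM1 hMdet⟩
  obtain ⟨b, ⟨lam, hlam, hbsum⟩, hbdeg⟩ := hβmem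
  obtain ⟨a, hva, hadeg⟩ : ∃ a : Fin (m+1) → K[X],
      (∑ i, v i * a i = 1) ∧ (Finset.univ.sup fun i => (a i).natDegree) = β := by
    refine ⟨fun i => C lam⁻¹ * b i, ?_, ?_⟩
    · have h1 : ∑ i, v i * (C lam⁻¹ * b i) = C lam⁻¹ * ∑ i, v i * b i := by
        rw [Finset.mul_sum]
        exact Finset.sum_congr rfl fun i _ => by ring
      rw [h1, hbsum, ← _root_.map_mul, inv_mul_cancel₀ hlam, _root_.map_one]
    · rw [← hbdeg]
      exact Finset.sup_congr rfl fun i _ =>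
        Polynomial.natDegree_C_mul (inv_ne_zero hlam)
  obtain ⟨N0, hN01, hN0det, hN0deg⟩ : ∃ N : Matrix (Fin (m+1)) (Fin (m+1)) K[X],
      (∀ i, N i 0 = v i) ∧ N.det = 1 ∧
      (∑ j : Fin m, Finset.univ.sup fun i => (N i j.succ).natDegree) ≤
        Finset.univ.sup fun i => (a i).natDegree := by
    set c0 : Fin m → K[X] := fun s => ∑ i', a i' * M i' s.succ with hc0
    set W0 : Fin m → Fin (m+1) → K[X] := fun j i => M i j.succ - c0 j * v i with hW0
    have hdet0 : (MCAux.mat v W0).det = 1 := by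
      rw [hW0, MCAux.det_mat_sub M v hM1 c0, hMdet]
    have horth0 : ∀ j, ∑ i, a i * W0 j i = 0 := by
      intro j
      have h1 : ∑ i, a i * W0 j i
          = (∑ i, a i * M i j.succ) - c0 j * ∑ i, a i * v i := by
        rw [Finset.mul_sum, ← Finset.sum_sub_distrib]
        refine Finset.sum_congr rfl fun i _ => ?_
        rw [hW0]
        ring
      have h2 : ∑ i, a i * v i = 1 := by
        rw [← hva]
        exact Finset.sum_congr rfl fun i _ => mul_comm _ _
      rw [h1, h2, mul_one, hc0, sub_self]
    exact MCAux.exists_completion_aux v a hva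
      (∑ j, Finset.univ.sup fun i => (W0 j i).natDegree) W0 rfl hdet0 horth0
  have hN0total : (∑ j, Finset.univ.sup fun i => (N0 i j).natDegree)
      ≤ (Finset.univ.sup fun i => (v i).natDegree) + β := by
    rw [Fin.sum_univ_succ]
    have h0 : (Finset.univ.sup fun i => (N0 i 0).natDegree)
        = Finset.univ.sup fun i => (v i).natDegree :=
      Finset.sup_congr rfl fun i _ => by rw [hN01]
    rw [h0]
    exact add_le_add_right (hN0deg.trans (le_of_eq hadeg)) _
  refine ⟨hlow M hM1 hMdet, ⟨fun hmin => ?_, fun heq N hN1 hNdet => ?_⟩⟩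
  · exact le_antisymm ((hmin N0 hN01 hN0det).trans hN0total) (hlow M hM1 hMdet)
  · rw [heq]
    exact hlow N hN1 hNdet
end
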